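/- Let U ⊆ ℂ be a bounded connected open set, and let W_n, W ⊆ U be bounded connected open sets with 0 ∈ W_n for all n and 0 ∈ W. Assume d_H(closure(W_n), closure(W)) → 0 and d_H(∂W_n, ∂W) → 0 (Hausdorff distances), and that the function p ↦ η_W(p) is continuous on W. Then η_{W_n} → η_W uniformly on every compact subset of W. (This combines Theorem 1.9 and Theorem 1.6 of the paper, in the case of the trivial single-leaf nonsingular foliation of U.) -/

import Mathlib

open Filter Metric Topology Set

/-- The modulus-of-uniformization function of a plane domain `Ω` (for the trivial
single-leaf foliation): the supremum of `|f'(0)|` over holomorphic maps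
`f : 𝔻 → Ω` with `f 0 = p` (with `sSup ∅ = 0`). -/
noncomputable def eta (Ω : Set ℂ) (p : ℂ) : ℝ :=
  sSup {r : ℝ | ∃ f : ℂ → ℂ, DifferentiableOn ℂ f (ball (0 : ℂ) 1) ∧ f 0 = p ∧
    (∀ z ∈ ball (0 : ℂ) 1, f z ∈ Ω) ∧ r = ‖deriv f 0‖}

/-!
Since `η_{W₀}` is continuous and `K` is compact, it suffices to show that near each `x ∈ W₀`
the values `η_{W n}(y)` are eventually squeezed between `η_{W₀}(x) ± ε`, locally uniformly in `y`.

From below: a near-extremal disc for `W₀` at `x`, slightly shrunk, has compact image inside `W₀`.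
Convergence of closures and of frontiers puts a fixed neighbourhood of that image inside `W n`
for large `n`, and translating the disc to `y` shows `η_{W n}(y) ≥ η_{W₀}(x) - ε`.

From above: near-extremal discs for `W (n k)` at points `y k → x` form a normal family, because the
`W n` are eventually uniformly bounded. A limit `G` has `|G'(0)| ≥ limsup η_{W (n k)}(y k)`, so
`G` is not constant; it maps into `closure W₀`, and a Hurwitz-type argument with the frontier
convergence shows it maps into `W₀`. Hence `η_{W₀}(x)` bounds the limsup.
-/

open Bornology

section Eta

variable {Ω : Set ℂ} {f : ℂ → ℂ} {p : ℂ}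

theorem eta_nonneg (Ω : Set ℂ) (p : ℂ) : 0 ≤ eta Ω p :=
  Real.sSup_nonneg <| by rintro _ ⟨f, -, -, -, rfl⟩; exact norm_nonneg _

theorem norm_deriv_le_eta (hΩ : IsBounded Ω) (hf : DifferentiableOn ℂ f (ball 0 1))
    (hf0 : f 0 = p) (hfΩ : MapsTo f (ball 0 1) Ω) : ‖deriv f 0‖ ≤ eta Ω p := by
  obtain ⟨R, hR⟩ := hΩ.subset_closedBall p
  refine le_csSup ⟨R, ?_⟩ ⟨f, hf, hf0, hfΩ, rfl⟩
  rintro _ ⟨g, hg, rfl, hgΩ, rfl⟩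
  simpa using Complex.norm_deriv_le_div_of_mapsTo_ball hg (MapsTo.mono_right hgΩ hR) one_pos

theorem mul_norm_deriv_le_eta (hΩ : IsBounded Ω) {r : ℝ} (hr : 0 < r)
    (hf : DifferentiableOn ℂ f (ball 0 r)) (hf0 : f 0 = p) (hfΩ : MapsTo f (ball 0 r) Ω) :
    r * ‖deriv f 0‖ ≤ eta Ω p := by
  have hscale : MapsTo (fun z : ℂ => (r : ℂ) * z) (ball 0 1) (ball 0 r) := fun z hz => by
    simpa [norm_mul, abs_of_pos hr, hr] using mul_lt_mul_of_pos_left (mem_ball_zero_iff.1 hz) hr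
  have := norm_deriv_le_eta hΩ (f := fun z => f (r * z)) (hf.comp (by fun_prop) hscale)
    (by simpa using hf0) (hfΩ.comp hscale)
  simpa [deriv_comp_mul_left, abs_of_pos hr] using this

theorem exists_norm_deriv_gt_of_lt_eta {c : ℝ} (hc : 0 ≤ c) (h : c < eta Ω p) :
    ∃ f : ℂ → ℂ, DifferentiableOn ℂ f (ball 0 1) ∧ f 0 = p ∧ MapsTo f (ball 0 1) Ω ∧
      c < ‖deriv f 0‖ := by
  obtain ⟨_, ⟨f, hf, hf0, hfΩ, rfl⟩, hcf⟩ := exists_lt_of_lt_csSup (nonempty_iff_ne_empty.2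
    fun hempty => h.not_ge <| by rw [eta, hempty, Real.sSup_empty]; exact hc) h
  exact ⟨f, hf, hf0, hfΩ, hcf⟩

theorem exists_closedBall_norm_deriv_gt_of_lt_eta {c : ℝ} (hc : 0 ≤ c) (h : c < eta Ω p) :
    ∃ f : ℂ → ℂ, DifferentiableOn ℂ f (closedBall 0 1) ∧ f 0 = p ∧
      MapsTo f (closedBall 0 1) Ω ∧ c < ‖deriv f 0‖ := by
  obtain ⟨f, hf, hf0, hfΩ, hcf⟩ := exists_norm_deriv_gt_of_lt_eta hc h
  have hpos : 0 < ‖deriv f 0‖ := hc.trans_lt hcf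
  obtain ⟨s, hcs, hs1⟩ := exists_between ((div_lt_one hpos).2 hcf)
  have hs0 : 0 < s := (div_nonneg hc hpos.le).trans_lt hcs
  have hscale : MapsTo (fun z : ℂ => (s : ℂ) * z) (closedBall 0 1) (ball 0 1) := fun z hz => by
    have := mul_le_of_le_one_right hs0.le (mem_closedBall_zero_iff.1 hz)
    simpa [norm_mul, abs_of_pos hs0] using this.trans_lt hs1
  refine ⟨fun z => f (s * z), hf.comp (by fun_prop) hscale, by simpa using hf0,
    hfΩ.comp hscale, ?_⟩
  simpa [deriv_comp_mul_left, abs_of_pos hs0] using (div_lt_iff₀ hpos).1 hcs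

theorem norm_deriv_le_eta_of_cthickening_subset (hΩ : IsBounded Ω)
    (hf : DifferentiableOn ℂ f (closedBall 0 1)) {r : ℝ}
    (hr : cthickening r (f '' closedBall 0 1) ⊆ Ω) (hp : dist p (f 0) ≤ r) :
    ‖deriv f 0‖ ≤ eta Ω p := by
  have := norm_deriv_le_eta hΩ (f := fun z => f z + (p - f 0)) (p := p)
    ((hf.mono ball_subset_closedBall).add_const _) (by simp) fun z hz =>
      hr <| mem_cthickening_of_dist_le _ (f z) r _ (mem_image_of_mem f (ball_subset_closedBall hz))
        (by simpa [dist_eq_norm] using hp)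
  simpa [deriv_add_const] using this

end Eta

theorem IsPreconnected.subset_of_disjoint_frontier {X : Type*} [TopologicalSpace X] {s t : Set X}
    (hs : IsPreconnected s) (ht : IsOpen t) (hst : Disjoint s (frontier t))
    (hne : (s ∩ t).Nonempty) : s ⊆ t := by
  refine hs.subset_left_of_subset_union ht isClosed_closure.isOpen_compl
    (disjoint_compl_right.mono_left subset_closure) (fun x hx => ?_) hne
  by_cases hxt : x ∈ t
  · exact Or.inl hxt
  · exact Or.inr fun hcl => hst.notMem_of_mem_left hx ⟨hcl, by rwa [ht.interior_eq]⟩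

section Hausdorff

variable {α : Type*} [PseudoMetricSpace α] {E : Type*} [NormedAddCommGroup E] [NormedSpace ℝ E]
  {ι : Type*} {l : Filter ι}

/-- A point of `B` near `x` can only be separated from `x` by a point of `frontier B`, and that
would bring a point of `frontier A` into `ball x (2 * r) ⊆ interior A`. -/
theorem mem_of_ball_subset_of_hausdorffDist_lt {A B : Set E} {x : E} {r : ℝ} (hB : IsOpen B)
    (hx : ball x (2 * r) ⊆ A)
    (hcl : hausdorffDist (closure B) (closure A) < r)
    (hcl_ne_top : hausdorffEDist (closure B) (closure A) ≠ ⊤)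
    (hfr : hausdorffDist (frontier B) (frontier A) < r)
    (hfr_ne_top : hausdorffEDist (frontier B) (frontier A) ≠ ⊤) : x ∈ B := by
  have hr : 0 < r := hausdorffDist_nonneg.trans_lt hcl
  obtain ⟨w, hw, hwx⟩ := exists_dist_lt_of_hausdorffDist_lt'
    (subset_closure (hx (mem_ball_self (by positivity)))) hcl hcl_ne_top
  have hmeet : (ball x r ∩ B).Nonempty :=
    _root_.mem_closure_iff.1 hw _ isOpen_ball (mem_ball.2 hwx)
  by_contra hxB
  obtain ⟨y, hyx, hyB⟩ : (ball x r ∩ frontier B).Nonempty := by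
    rw [← not_disjoint_iff_nonempty_inter]
    exact fun hdisj => hxB <| (convex_ball x r).isPreconnected.subset_of_disjoint_frontier hB
      hdisj hmeet (mem_ball_self hr)
  obtain ⟨y', hy'A, hyy'⟩ := exists_dist_lt_of_hausdorffDist_lt hyB hfr hfr_ne_top
  have hy'x : y' ∈ ball x (2 * r) := by
    rw [mem_ball] at hyx ⊢
    linarith [dist_triangle y' y x, dist_comm y y']
  exact hy'A.2 (interior_mono hx (by rwa [isOpen_ball.interior_eq]))

theorem eventually_cthickening_subset_of_hausdorffDist {W : ι → Set E} {W₀ S : Set E}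
    (hW : ∀ i, IsOpen (W i)) (hW₀ : IsOpen W₀) (hS : IsCompact S) (hSW₀ : S ⊆ W₀)
    (hcl_ne_top : ∀ i, hausdorffEDist (closure (W i)) (closure W₀) ≠ ⊤)
    (hfr_ne_top : ∀ i, hausdorffEDist (frontier (W i)) (frontier W₀) ≠ ⊤)
    (hcl : Tendsto (fun i => hausdorffDist (closure (W i)) (closure W₀)) l (𝓝 0))
    (hfr : Tendsto (fun i => hausdorffDist (frontier (W i)) (frontier W₀)) l (𝓝 0)) :
    ∃ r > 0, ∀ᶠ i in l, cthickening r S ⊆ W i := by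
  obtain ⟨δ, hδ, hδW₀⟩ := hS.exists_thickening_subset_open hW₀ hSW₀
  refine ⟨δ / 4, by positivity, ?_⟩
  filter_upwards [hcl.eventually (gt_mem_nhds (show 0 < δ / 4 by positivity)),
    hfr.eventually (gt_mem_nhds (show 0 < δ / 4 by positivity))] with i hcli hfri z hz
  refine mem_of_ball_subset_of_hausdorffDist_lt (hW i) (fun w hw => hδW₀ ?_) hcli
    (hcl_ne_top i) hfri (hfr_ne_top i)
  exact thickening_mono (by linarith) S <| thickening_cthickening_subset _ (by positivity) S <|
    ball_subset_thickening hz _ hw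

theorem mem_closure_of_tendsto_of_hausdorffDist [l.NeBot] {A : ι → Set α} {B : Set α}
    (hfin : ∀ i, hausdorffEDist (A i) B ≠ ⊤)
    (hAB : Tendsto (fun i => hausdorffDist (A i) B) l (𝓝 0)) {x : ι → α} {z : α}
    (hxA : ∀ᶠ i in l, x i ∈ A i) (hxz : Tendsto x l (𝓝 z)) : z ∈ closure B := by
  refine Metric.mem_closure_iff.2 fun ε hε => ?_
  obtain ⟨i, hxi, hABi, hzi⟩ := (hxA.and <| (hAB.eventually (gt_mem_nhds (half_pos hε))).and
    (Metric.tendsto_nhds.1 hxz _ (half_pos hε))).exists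
  obtain ⟨y, hyB, hxy⟩ := exists_dist_lt_of_hausdorffDist_lt hxi hABi (hfin i)
  exact ⟨y, hyB, by linarith [dist_triangle z (x i) y, dist_comm z (x i)]⟩

theorem eventually_not_ball_subset_of_hausdorffDist_frontier {W : ι → Set α} {B : Set α}
    (hW : ∀ i, IsOpen (W i)) (hfin : ∀ i, hausdorffEDist (frontier (W i)) B ≠ ⊤)
    (hWB : Tendsto (fun i => hausdorffDist (frontier (W i)) B) l (𝓝 0)) {q : α} (hq : q ∈ B)
    {m : ℝ} (hm : 0 < m) : ∀ᶠ i in l, ¬ ball q m ⊆ W i := by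
  filter_upwards [hWB.eventually (gt_mem_nhds hm)] with i hi hball
  obtain ⟨w, hw, hwq⟩ := exists_dist_lt_of_hausdorffDist_lt' hq hi (hfin i)
  exact ((hW i).frontier_eq ▸ hw).2 (hball hwq)

theorem exists_isBounded_eventually_subset_of_hausdorffDist {A : ι → Set α} {B : Set α}
    (hB : IsBounded B) (hfin : ∀ i, hausdorffEDist (A i) B ≠ ⊤)
    (hAB : Tendsto (fun i => hausdorffDist (A i) B) l (𝓝 0)) :
    ∃ s, IsBounded s ∧ ∀ᶠ i in l, A i ⊆ s := by
  refine ⟨thickening 1 B, hB.thickening, ?_⟩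
  filter_upwards [hAB.eventually (gt_mem_nhds one_pos)] with i hi x hx
  obtain ⟨y, hy, hxy⟩ := exists_dist_lt_of_hausdorffDist_lt hx hi (hfin i)
  exact mem_thickening_iff.2 ⟨y, hy, hxy⟩

theorem hausdorffEDist_frontier_ne_top [Nontrivial E] {s t : Set E} (hs : s.Nonempty)
    (hs' : IsBounded s) (ht : t.Nonempty) (ht' : IsBounded t) :
    hausdorffEDist (frontier s) (frontier t) ≠ ⊤ := by
  have hfr : ∀ {u : Set E}, u.Nonempty → IsBounded u → (frontier u).Nonempty := fun hu hu' =>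
    nonempty_frontier_iff.2 ⟨hu, fun h => NormedSpace.unbounded_univ ℝ E (h ▸ hu')⟩
  exact hausdorffEDist_ne_top_of_nonempty_of_bounded (hfr hs hs') (hfr ht ht')
    (hs'.closure.subset frontier_subset_closure) (ht'.closure.subset frontier_subset_closure)

end Hausdorff

theorem dist_le_mul_dist_of_mapsTo_closedBall {f : ℂ → ℂ} {c : ℂ} {R r C : ℝ} (hr : r < R)
    (hf : DifferentiableOn ℂ f (ball c R)) (hC : MapsTo f (ball c R) (closedBall 0 C))
    {x y : ℂ} (hx : x ∈ closedBall c r) (hy : y ∈ closedBall c r) :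
    dist (f x) (f y) ≤ 2 * C / (R - r) * dist x y := by
  have hderiv : ∀ z ∈ closedBall c r, ‖deriv f z‖ ≤ 2 * C / (R - r) := by
    intro z hz
    have hball : ball z (R - r) ⊆ ball c R :=
      ball_subset_ball' (by linarith [mem_closedBall.1 hz])
    refine Complex.norm_deriv_le_div_of_mapsTo_ball (hf.mono hball) (fun w hw => ?_)
      (sub_pos.2 hr)
    have hw0 := mem_closedBall.1 (hC (hball hw))
    have hz0 := mem_closedBall.1 (hC (closedBall_subset_ball hr hz))
    exact mem_closedBall.2 (by linarith [dist_triangle (f w) 0 (f z), dist_comm (f z) (0 : ℂ)])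
  have := (convex_closedBall c r).norm_image_sub_le_of_norm_deriv_le
    (fun z hz => hf.differentiableAt (isOpen_ball.mem_nhds (closedBall_subset_ball hr hz)))
    hderiv hy hx
  simpa [dist_eq_norm] using this

/-- **Montel's theorem**, by Arzelà–Ascoli: the Cauchy estimate makes the family equi-Lipschitz
on the smaller disc. -/
theorem exists_subseq_tendstoUniformlyOn_closedBall {c : ℂ} {R r C : ℝ} (hr : r < R)
    {g : ℕ → ℂ → ℂ} (hg : ∀ k, DifferentiableOn ℂ (g k) (ball c R))
    (hC : ∀ k, MapsTo (g k) (ball c R) (closedBall 0 C)) :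
    ∃ φ : ℕ → ℕ, StrictMono φ ∧ ∃ G : ℂ → ℂ,
      TendstoUniformlyOn (fun k => g (φ k)) G atTop (closedBall c r) := by
  classical
  have hsub : closedBall c r ⊆ ball c R := closedBall_subset_ball hr
  have : CompactSpace (closedBall c r) := isCompact_iff_compactSpace.1 (isCompact_closedBall c r)
  let F : ℕ → BoundedContinuousFunction (closedBall c r) ℂ := fun k =>
    .mkOfCompact ⟨fun x => g k x, ((hg k).continuousOn.mono hsub).domRestrict⟩
  have hF : IsCompact (closure (range F)) := by
    refine BoundedContinuousFunction.arzela_ascoli (closedBall 0 C) (isCompact_closedBall 0 C) _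
      (by rintro _ x ⟨k, rfl⟩; exact hC k (hsub x.2)) ?_
    refine equicontinuous_of_continuity_modulus (fun t => 2 * C / (R - r) * t) ?_ _ ?_
    · simpa using (continuous_const_mul (2 * C / (R - r))).tendsto 0
    · rintro x y ⟨_, k, rfl⟩
      exact dist_le_mul_dist_of_mapsTo_closedBall hr (hg k) (hC k) x.2 y.2
  obtain ⟨G, -, φ, hφ, hconv⟩ := hF.tendsto_subseq fun k => subset_closure (mem_range_self k)
  refine ⟨φ, hφ, fun z => if h : z ∈ closedBall c r then G ⟨z, h⟩ else 0, ?_⟩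
  rw [tendstoUniformlyOn_iff_tendstoUniformly_comp_coe]
  convert BoundedContinuousFunction.tendsto_iff_tendstoUniformly.1 hconv using 1
  · rfl
  · funext x
    exact dif_pos x.2

/-- Minimum modulus principle: otherwise `1 / (g - w)` would violate the maximum modulus
principle. -/
theorem mem_image_closedBall_of_norm_sub_lt {g : ℂ → ℂ} {z₀ w : ℂ} {ρ a : ℝ} (hρ : 0 < ρ)
    (hg : DiffContOnCl ℂ g (ball z₀ ρ)) (hz₀ : ‖g z₀ - w‖ < a)
    (hsphere : ∀ z ∈ sphere z₀ ρ, a ≤ ‖g z - w‖) : w ∈ g '' closedBall z₀ ρ := by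
  by_contra hw
  have ha : 0 < a := (norm_nonneg _).trans_lt hz₀
  have hne : ∀ z ∈ closure (ball z₀ ρ), g z - w ≠ 0 := fun z hz h =>
    hw ⟨z, closure_ball z₀ hρ.ne' ▸ hz, sub_eq_zero.1 h⟩
  have hpos : 0 < ‖g z₀ - w‖ := norm_pos_iff.2 (hne z₀ (subset_closure (mem_ball_self hρ)))
  have hmax := Complex.norm_le_of_forall_mem_frontier_norm_le isBounded_ball
    ((hg.sub_const w).inv hne) (C := a⁻¹) (fun z hz => ?_) (subset_closure (mem_ball_self hρ))
  · simp only [Pi.inv_apply, norm_inv] at hmax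
    exact hz₀.not_ge ((inv_le_inv₀ hpos ha).1 hmax)
  · rw [frontier_ball z₀ hρ.ne'] at hz
    simp only [Pi.inv_apply, norm_inv]
    exact inv_anti₀ ha (hsphere z hz)

theorem eventually_ne_of_deriv_ne_zero {U : Set ℂ} {G : ℂ → ℂ} (hU : IsOpen U)
    (hUc : IsPreconnected U) (hG : DifferentiableOn ℂ G U) {z₁ : ℂ} (hz₁ : z₁ ∈ U)
    (hd : deriv G z₁ ≠ 0) {z₀ : ℂ} (hz₀ : z₀ ∈ U) : ∀ᶠ z in 𝓝[≠] z₀, G z ≠ G z₀ := by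
  have hGa := hG.analyticOnNhd hU
  refine ((hGa z₀ hz₀).eventually_eq_or_eventually_ne analyticAt_const).resolve_left
    fun hconst => hd ?_
  have hEq : EqOn G (fun _ => G z₀) U :=
    hGa.eqOn_of_preconnected_of_eventuallyEq analyticOnNhd_const hUc hz₀ hconst
  rw [(hEq.eventuallyEq_of_mem (hU.mem_nhds hz₁)).deriv_eq, deriv_const]

/-- On a small circle around `z₀` we have `M ≤ |G - G z₀|`; once `g i` is `M / 4`-close to `G`,
the minimum modulus principle puts all of `ball (G z₀) (M / 4)` into the image of `g i`. -/
theorem eventually_ball_subset_image_of_tendstoLocallyUniformlyOn {ι : Type*} {l : Filter ι}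
    {U : Set ℂ} (hU : IsOpen U) {g : ι → ℂ → ℂ} {G : ℂ → ℂ}
    (hg : ∀ i, DifferentiableOn ℂ (g i) U) (hG : ContinuousOn G U)
    (hconv : TendstoLocallyUniformlyOn g G l U) {z₀ : ℂ} (hz₀ : z₀ ∈ U)
    (hne : ∀ᶠ z in 𝓝[≠] z₀, G z ≠ G z₀) :
    ∃ m > 0, ∀ᶠ i in l, ball (G z₀) m ⊆ g i '' U := by
  obtain ⟨ε, hε, hεU⟩ : ∃ ε > 0, ball z₀ ε ⊆ {z | z ≠ z₀ → G z ≠ G z₀} ∩ U :=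
    Metric.mem_nhds_iff.1 (inter_mem (eventually_nhdsWithin_iff.1 hne) (hU.mem_nhds hz₀))
  have hρ : 0 < ε / 2 := half_pos hε
  have hρε : closedBall z₀ (ε / 2) ⊆ ball z₀ ε := closedBall_subset_ball (half_lt_self hε)
  have hsub : closedBall z₀ (ε / 2) ⊆ U := fun z hz => (hεU (hρε hz)).2
  obtain ⟨M, hM, hMle⟩ : ∃ M > 0, ∀ z ∈ sphere z₀ (ε / 2), M ≤ dist (G z) (G z₀) := by
    simp only [dist_eq_norm]
    obtain ⟨z₁, hz₁, hmin⟩ := (isCompact_sphere z₀ (ε / 2)).exists_isMinOn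
      (NormedSpace.sphere_nonempty.2 hρ.le) (f := fun z => ‖G z - G z₀‖)
      ((hG.mono (sphere_subset_closedBall.trans hsub)).sub continuousOn_const).norm
    refine ⟨_, norm_pos_iff.2 (sub_ne_zero.2 ((hεU (hρε (sphere_subset_closedBall hz₁))).1 ?_)),
      fun z hz => hmin hz⟩
    rintro rfl
    simp only [mem_sphere, dist_self] at hz₁
    linarith
  have hunif := Metric.tendstoUniformlyOn_iff.1 ((tendstoLocallyUniformlyOn_iff_forall_isCompact
    hU).1 hconv _ hsub (isCompact_closedBall z₀ _)) (M / 4) (by positivity)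
  refine ⟨M / 4, by positivity, ?_⟩
  filter_upwards [hunif] with i hi w hw
  rw [mem_ball] at hw
  refine image_mono hsub (mem_image_closedBall_of_norm_sub_lt hρ ((hg i).diffContOnCl_ball hsub)
    (a := M / 2) ?_ fun z hz => ?_)
  · rw [← dist_eq_norm]
    linarith [hi z₀ (mem_closedBall_self hρ.le), dist_triangle (g i z₀) (G z₀) w,
      dist_comm (G z₀) (g i z₀), dist_comm w (G z₀)]
  · rw [← dist_eq_norm]
    linarith [hMle z hz, hi z (sphere_subset_closedBall hz), dist_triangle4 (G z) (g i z) w (G z₀)]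

/-- Hurwitz-type stability: `G` maps into `closure W₀`, and a value `G z₀ ∈ frontier W₀` would
force a fixed disc around `G z₀` into all late `V i`, while `frontier (V i)` comes arbitrarily
close to `G z₀`. -/
theorem mapsTo_of_tendstoLocallyUniformlyOn_of_hausdorffDist {ι : Type*} {l : Filter ι}
    [l.NeBot] {V : ι → Set ℂ} {W₀ : Set ℂ} (hV : ∀ i, IsOpen (V i)) (hW₀ : IsOpen W₀)
    (hcl_ne_top : ∀ i, hausdorffEDist (closure (V i)) (closure W₀) ≠ ⊤)
    (hfr_ne_top : ∀ i, hausdorffEDist (frontier (V i)) (frontier W₀) ≠ ⊤)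
    (hcl : Tendsto (fun i => hausdorffDist (closure (V i)) (closure W₀)) l (𝓝 0))
    (hfr : Tendsto (fun i => hausdorffDist (frontier (V i)) (frontier W₀)) l (𝓝 0))
    {U : Set ℂ} (hU : IsOpen U) {g : ι → ℂ → ℂ} {G : ℂ → ℂ}
    (hg : ∀ i, DifferentiableOn ℂ (g i) U) (hgV : ∀ i, MapsTo (g i) U (V i))
    (hG : ContinuousOn G U) (hconv : TendstoLocallyUniformlyOn g G l U)
    (hne : ∀ z₀ ∈ U, ∀ᶠ z in 𝓝[≠] z₀, G z ≠ G z₀) : MapsTo G U W₀ := by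
  intro z₀ hz₀
  by_contra hGz₀
  have hcl' : G z₀ ∈ closure W₀ := closure_closure (s := W₀) ▸
    mem_closure_of_tendsto_of_hausdorffDist hcl_ne_top hcl
      (.of_forall fun i => subset_closure (hgV i hz₀)) (hconv.tendsto_at hz₀)
  obtain ⟨m, hm, hball⟩ := eventually_ball_subset_image_of_tendstoLocallyUniformlyOn hU hg hG
    hconv hz₀ (hne z₀ hz₀)
  have hfj : G z₀ ∈ frontier W₀ := hW₀.frontier_eq ▸ ⟨hcl', hGz₀⟩
  obtain ⟨i, hi, hi'⟩ := (hball.and (eventually_not_ball_subset_of_hausdorffDist_frontier hV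
    hfr_ne_top hfr hfj hm)).exists
  exact hi' (hi.trans (image_subset_iff.2 (hgV i)))

section Convergence

variable {W : ℕ → Set ℂ} {W₀ : Set ℂ}

theorem eventually_lt_eta (hW : ∀ n, IsOpen (W n)) (hWbdd : ∀ n, IsBounded (W n))
    (hW₀ : IsOpen W₀) (hcl_ne_top : ∀ n, hausdorffEDist (closure (W n)) (closure W₀) ≠ ⊤)
    (hfr_ne_top : ∀ n, hausdorffEDist (frontier (W n)) (frontier W₀) ≠ ⊤)
    (hcl : Tendsto (fun n => hausdorffDist (closure (W n)) (closure W₀)) atTop (𝓝 0))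
    (hfr : Tendsto (fun n => hausdorffDist (frontier (W n)) (frontier W₀)) atTop (𝓝 0))
    {x : ℂ} {c : ℝ} (hc : c < eta W₀ x) : ∀ᶠ q in atTop ×ˢ 𝓝 x, c < eta (W q.1) q.2 := by
  rcases lt_or_ge c 0 with hc0 | hc0
  · exact .of_forall fun q => hc0.trans_le (eta_nonneg _ _)
  obtain ⟨f, hf, hf0, hfW₀, hcf⟩ := exists_closedBall_norm_deriv_gt_of_lt_eta hc0 hc
  obtain ⟨r, hr, hrW⟩ := eventually_cthickening_subset_of_hausdorffDist hW hW₀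
    ((isCompact_closedBall 0 1).image_of_continuousOn hf.continuousOn) (image_subset_iff.2 hfW₀)
    hcl_ne_top hfr_ne_top hcl hfr
  filter_upwards [hrW.prod_mk (closedBall_mem_nhds x hr)] with q ⟨hq, hqx⟩
  exact hcf.trans_le (norm_deriv_le_eta_of_cthickening_subset (hWbdd q.1) hf hq (hf0 ▸ hqx))

/-- Montel's theorem only yields a limit of the near-extremal discs on `ball 0 r` for `r < 1`,
hence `r * c ≤ eta W₀ x` for every such `r`. -/
theorem le_eta_of_tendsto (hW : ∀ n, IsOpen (W n)) (hW₀ : IsOpen W₀) (hW₀bdd : IsBounded W₀)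
    (hcl_ne_top : ∀ n, hausdorffEDist (closure (W n)) (closure W₀) ≠ ⊤)
    (hfr_ne_top : ∀ n, hausdorffEDist (frontier (W n)) (frontier W₀) ≠ ⊤)
    (hcl : Tendsto (fun n => hausdorffDist (closure (W n)) (closure W₀)) atTop (𝓝 0))
    (hfr : Tendsto (fun n => hausdorffDist (frontier (W n)) (frontier W₀)) atTop (𝓝 0))
    {n : ℕ → ℕ} (hn : Tendsto n atTop atTop) {C : ℝ} (hC : ∀ k, W (n k) ⊆ closedBall 0 C)
    {p : ℕ → ℂ} {x : ℂ} (hp : Tendsto p atTop (𝓝 x)) {c : ℝ}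
    (hc : ∀ k, c < eta (W (n k)) (p k)) : c ≤ eta W₀ x := by
  rcases le_or_gt c 0 with hc0 | hc0
  · exact hc0.trans (eta_nonneg _ _)
  choose f hf hf0 hfW hcf using fun k => exists_norm_deriv_gt_of_lt_eta hc0.le (hc k)
  refine le_of_tendsto (f := fun r : ℝ => r * c) (x := 𝓝[<] 1) ?_ ?_
  · simpa using ((continuous_mul_const c).tendsto 1).mono_left nhdsWithin_le_nhds
  filter_upwards [Ioo_mem_nhdsLT one_pos] with r ⟨hr0, hr1⟩
  obtain ⟨φ, hφ, G, hG⟩ := exists_subseq_tendstoUniformlyOn_closedBall hr1 hf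
    fun k => (hfW k).mono_right (hC k)
  have hφ' := hφ.tendsto_atTop
  have hconv : TendstoLocallyUniformlyOn (fun j => f (φ j)) G atTop (ball 0 r) :=
    hG.tendstoLocallyUniformlyOn.mono ball_subset_closedBall
  have hfj : ∀ j, DifferentiableOn ℂ (f (φ j)) (ball 0 r) := fun j =>
    (hf _).mono (ball_subset_ball hr1.le)
  have hGd : DifferentiableOn ℂ G (ball 0 r) :=
    hconv.differentiableOn (.of_forall hfj) isOpen_ball
  have h0 : (0 : ℂ) ∈ ball 0 r := mem_ball_self hr0
  have hG0 : G 0 = x :=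
    tendsto_nhds_unique (hconv.tendsto_at h0) ((hp.comp hφ').congr fun j => (hf0 _).symm)
  have hGc : c ≤ ‖deriv G 0‖ :=
    ge_of_tendsto ((hconv.deriv (.of_forall hfj) isOpen_ball).tendsto_at h0).norm
      (.of_forall fun j => (hcf _).le)
  have hGW₀ : MapsTo G (ball 0 r) W₀ :=
    mapsTo_of_tendstoLocallyUniformlyOn_of_hausdorffDist (V := fun j => W (n (φ j)))
      (fun j => hW _) hW₀ (fun j => hcl_ne_top _) (fun j => hfr_ne_top _)
      (hcl.comp (hn.comp hφ')) (hfr.comp (hn.comp hφ')) isOpen_ball hfj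
      (fun j => (hfW _).mono_left (ball_subset_ball hr1.le)) hGd.continuousOn hconv
      fun z₀ hz₀ => eventually_ne_of_deriv_ne_zero isOpen_ball (convex_ball 0 r).isPreconnected
        hGd h0 (norm_pos_iff.1 (hc0.trans_le hGc)) hz₀
  calc r * c ≤ r * ‖deriv G 0‖ := by gcongr
    _ ≤ eta W₀ x := mul_norm_deriv_le_eta hW₀bdd hr0 hGd hG0 hGW₀

theorem eventually_eta_lt (hW : ∀ n, IsOpen (W n)) (hW₀ : IsOpen W₀) (hW₀bdd : IsBounded W₀)
    (hcl_ne_top : ∀ n, hausdorffEDist (closure (W n)) (closure W₀) ≠ ⊤)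
    (hfr_ne_top : ∀ n, hausdorffEDist (frontier (W n)) (frontier W₀) ≠ ⊤)
    (hcl : Tendsto (fun n => hausdorffDist (closure (W n)) (closure W₀)) atTop (𝓝 0))
    (hfr : Tendsto (fun n => hausdorffDist (frontier (W n)) (frontier W₀)) atTop (𝓝 0))
    {x : ℂ} {b : ℝ} (hb : eta W₀ x < b) : ∀ᶠ q in atTop ×ˢ 𝓝 x, eta (W q.1) q.2 < b := by
  obtain ⟨s, hs, hWs⟩ :=
    exists_isBounded_eventually_subset_of_hausdorffDist hW₀bdd.closure hcl_ne_top hcl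
  obtain ⟨C, hC⟩ := hs.subset_closedBall 0
  obtain ⟨c, hxc, hcb⟩ := exists_between hb
  by_contra h
  obtain ⟨q, hq, hqb⟩ := exists_seq_forall_of_frequently
    ((not_eventually.1 h).and_eventually (tendsto_fst.eventually hWs))
  rw [tendsto_prod_iff'] at hq
  exact hxc.not_ge <| le_eta_of_tendsto hW hW₀ hW₀bdd hcl_ne_top hfr_ne_top hcl hfr hq.1
    (fun k => subset_closure.trans ((hqb k).2.trans hC)) hq.2
    fun k => hcb.trans_le (not_lt.1 (hqb k).1)

theorem tendstoUniformlyOnFilter_eta (hW : ∀ n, IsOpen (W n)) (hWbdd : ∀ n, IsBounded (W n))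
    (hWne : ∀ n, (W n).Nonempty) (hW₀ : IsOpen W₀) (hW₀bdd : IsBounded W₀)
    (hcl : Tendsto (fun n => hausdorffDist (closure (W n)) (closure W₀)) atTop (𝓝 0))
    (hfr : Tendsto (fun n => hausdorffDist (frontier (W n)) (frontier W₀)) atTop (𝓝 0))
    {x : ℂ} (hx : x ∈ W₀) (hcont : ContinuousAt (eta W₀) x) :
    TendstoUniformlyOnFilter (fun n p => eta (W n) p) (eta W₀) atTop (𝓝 x) := by
  have hcl_ne_top : ∀ n, hausdorffEDist (closure (W n)) (closure W₀) ≠ ⊤ := fun n =>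
    hausdorffEDist_ne_top_of_nonempty_of_bounded (hWne n).closure ⟨x, subset_closure hx⟩
      (hWbdd n).closure hW₀bdd.closure
  have hfr_ne_top : ∀ n, hausdorffEDist (frontier (W n)) (frontier W₀) ≠ ⊤ := fun n =>
    hausdorffEDist_frontier_ne_top (hWne n) (hWbdd n) ⟨x, hx⟩ hW₀bdd
  refine Metric.tendstoUniformlyOnFilter_iff.2 fun ε hε => ?_
  filter_upwards [eventually_lt_eta hW hWbdd hW₀ hcl_ne_top hfr_ne_top hcl hfr
      (c := eta W₀ x - ε / 2) (by linarith),
    eventually_eta_lt hW hW₀ hW₀bdd hcl_ne_top hfr_ne_top hcl hfr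
      (b := eta W₀ x + ε / 2) (by linarith),
    tendsto_snd.eventually (Metric.tendsto_nhds.1 hcont _ (half_pos hε))] with q hlow hup hnear
  rw [Real.dist_eq, abs_lt] at hnear ⊢
  constructor <;> linarith [hnear.1, hnear.2]

end Convergence

theorem eta_uniform_convergence_of_hausdorff_convergence_general
    (W : ℕ → Set ℂ) (W₀ : Set ℂ)
    (hWopen : ∀ n, IsOpen (W n))
    (hWbdd : ∀ n, Bornology.IsBounded (W n))
    (h0 : ∀ n, (0 : ℂ) ∈ W n)
    (hW₀open : IsOpen W₀)
    (hW₀bdd : Bornology.IsBounded W₀)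
    (hcl : Tendsto (fun n => hausdorffDist (closure (W n)) (closure W₀)) atTop (nhds 0))
    (hbd : Tendsto (fun n => hausdorffDist (frontier (W n)) (frontier W₀)) atTop (nhds 0))
    (hcont : ContinuousOn (eta W₀) W₀) :
    ∀ K : Set ℂ, IsCompact K → K ⊆ W₀ →
      TendstoUniformlyOn (fun n p => eta (W n) p) (fun p => eta W₀ p) atTop K := by
  intro K hK hKW₀
  rw [← tendstoLocallyUniformlyOn_iff_tendstoUniformlyOn_of_compact hK]
  refine TendstoLocallyUniformlyOn.mono (tendstoLocallyUniformlyOn_iff_filter.2 fun x hx => ?_) hKW₀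
  exact (tendstoUniformlyOnFilter_eta hWopen hWbdd (fun n => ⟨0, h0 n⟩) hW₀open hW₀bdd hcl hbd hx
    (hcont.continuousAt (hW₀open.mem_nhds hx))).mono_right nhdsWithin_le_nhds

/-- Theorems 1.9 and 1.6 combined, for the trivial single-leaf foliation of a
bounded plane domain `U`: if the bounded connected open
sets `W n ⊆ U` converge to the bounded connected open set `W₀ ⊆ U` in the
Hausdorff sense and `η_{W₀}` is continuous on `W₀`, then `η_{W n} → η_{W₀}`
uniformly on every compact subset of `W₀`. -/
theorem eta_uniform_convergence_of_hausdorff_convergence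
    (U : Set ℂ) (hUopen : IsOpen U) (hUconn : IsConnected U)
    (hUbdd : Bornology.IsBounded U)
    (W : ℕ → Set ℂ) (W₀ : Set ℂ)
    (hWopen : ∀ n, IsOpen (W n)) (hWconn : ∀ n, IsConnected (W n))
    (hWbdd : ∀ n, Bornology.IsBounded (W n))
    (hWU : ∀ n, W n ⊆ U) (h0 : ∀ n, (0 : ℂ) ∈ W n)
    (hW₀open : IsOpen W₀) (hW₀conn : IsConnected W₀)
    (hW₀bdd : Bornology.IsBounded W₀) (hW₀U : W₀ ⊆ U) (h0W₀ : (0 : ℂ) ∈ W₀)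
    (hcl : Tendsto (fun n => hausdorffDist (closure (W n)) (closure W₀)) atTop (nhds 0))
    (hbd : Tendsto (fun n => hausdorffDist (frontier (W n)) (frontier W₀)) atTop (nhds 0))
    (hcont : ContinuousOn (eta W₀) W₀) :
    ∀ K : Set ℂ, IsCompact K → K ⊆ W₀ →
      TendstoUniformlyOn (fun n p => eta (W n) p) (fun p => eta W₀ p) atTop K :=
  eta_uniform_convergence_of_hausdorff_convergence_general W W₀ hWopen hWbdd h0 hW₀open hW₀bdd hcl
    hbd hcont
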